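/- arXiv:2006.06440 — 2 statements merged into one kernel-verified Lean document; each statement's English description precedes it below -/
import Mathlib

section
/- Let T : ℓ_1^2 → ℓ_∞^3 be the bounded linear operator defined by T(x,y) = (x, y, (x+y)/2), where ℓ_1^2 is ℝ² with the norm ‖(x,y)‖ = |x| + |y| and ℓ_∞^3 is ℝ³ with the norm ‖(a,b,c)‖ = max{|a|,|b|,|c|}. Then T does not satisfy the Bhatia–Šemrl property; that is, there exists a bounded linear operator A : ℓ_1^2 → ℓ_∞^3 with T ⊥_B A such that Tx is not Birkhoff–James orthogonal to Ax for any x ∈ M_T. -/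
/-- Birkhoff–James orthogonality: `x ⊥_B y` iff `‖x + λ y‖ ≥ ‖x‖` for all real `λ`. -/
def BJOrth {E : Type*} [NormedAddCommGroup E] [NormedSpace ℝ E] (x y : E) : Prop :=
  ∀ lam : ℝ, ‖x‖ ≤ ‖x + lam • y‖

/-- The norm attainment set of a bounded linear operator. -/
def normAttainSet {X Y : Type*} [NormedAddCommGroup X] [NormedSpace ℝ X]
    [NormedAddCommGroup Y] [NormedSpace ℝ Y] (T : X →L[ℝ] Y) : Set X :=
  {x | ‖x‖ = 1 ∧ ‖T x‖ = ‖T‖}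

lemma norm_l1 (v : PiLp 1 (fun _ : Fin 2 => ℝ)) : ‖v‖ = |v 0| + |v 1| := by
  rw [PiLp.norm_eq_sum (by norm_num)]
  simp [Fin.sum_univ_two, Real.norm_eq_abs]

lemma norm_linf_le (f : Fin 3 → ℝ) (r : ℝ) (hr : 0 ≤ r)
    (h : ∀ i, |f i| ≤ r) : ‖f‖ ≤ r := by
  apply pi_norm_le_iff_of_nonneg hr |>.2
  simpa [Real.norm_eq_abs] using h

lemma coord_le_norm (f : Fin 3 → ℝ) (i : Fin 3) : |f i| ≤ ‖f‖ := by
  simpa [Real.norm_eq_abs] using norm_le_pi_norm f i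

noncomputable def Amap : PiLp 1 (fun _ : Fin 2 => ℝ) →L[ℝ] (Fin 3 → ℝ) :=
  LinearMap.mkContinuous
    { toFun := fun v => ![v 0, -v 1, 0]
      map_add' := by intro v w; funext i; fin_cases i <;> simp [PiLp.add_apply] <;> ring
      map_smul' := by intro c v; funext i; fin_cases i <;> simp [PiLp.smul_apply] } 1
    (by
      intro v
      rw [one_mul, norm_l1]
      apply norm_linf_le _ _ (by positivity)
      intro i
      fin_cases i <;> simp <;> linarith [abs_nonneg (v 0), abs_nonneg (v 1)])

lemma Amap_apply (v : PiLp 1 (fun _ : Fin 2 => ℝ)) : Amap v = ![v 0, -v 1, 0] := rfl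

noncomputable def e1 : PiLp 1 (fun _ : Fin 2 => ℝ) := (WithLp.equiv 1 _).symm ![1, 0]
noncomputable def e2 : PiLp 1 (fun _ : Fin 2 => ℝ) := (WithLp.equiv 1 _).symm ![0, 1]

lemma e1_0 : e1 0 = 1 := rfl
lemma e1_1 : e1 1 = 0 := rfl
lemma e2_0 : e2 0 = 0 := rfl
lemma e2_1 : e2 1 = 1 := rfl

lemma norm_e1 : ‖e1‖ = 1 := by rw [norm_l1, e1_0, e1_1]; norm_num
lemma norm_e2 : ‖e2‖ = 1 := by rw [norm_l1, e2_0, e2_1]; norm_num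

/-- The operator `T : ℓ_1^2 → ℓ_∞^3`, `T(x,y) = (x, y, (x+y)/2)`, does not
satisfy the Bhatia–Šemrl property.  Here `ℓ_1^2` is `PiLp 1 (fun _ : Fin 2 => ℝ)` and
`ℓ_∞^3` is `Fin 3 → ℝ` with the sup norm. -/
theorem stmt18 (T : PiLp 1 (fun _ : Fin 2 => ℝ) →L[ℝ] (Fin 3 → ℝ))
    (hT : ∀ v : PiLp 1 (fun _ : Fin 2 => ℝ), T v = ![v 0, v 1, (v 0 + v 1) / 2]) :
    ∃ A : PiLp 1 (fun _ : Fin 2 => ℝ) →L[ℝ] (Fin 3 → ℝ),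
      (∀ lam : ℝ, ‖T‖ ≤ ‖T + lam • A‖) ∧
      ∀ x ∈ normAttainSet T, ¬ BJOrth (T x) (A x) := by
  have hTle : ‖T‖ ≤ 1 := by
    apply T.opNorm_le_bound zero_le_one
    intro v
    rw [hT, one_mul, norm_l1]
    apply norm_linf_le _ _ (by positivity)
    intro i
    have habs : |(v 0 + v 1) / 2| = |v 0 + v 1| / 2 := by rw [abs_div]; norm_num
    fin_cases i <;> simp <;>
      linarith [abs_nonneg (v 0), abs_nonneg (v 1), abs_add_le (v 0) (v 1), habs]
  have hTge : (1 : ℝ) ≤ ‖T‖ := by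
    have hc : (T e1) 0 = 1 := by rw [hT, e1_0]; simp
    have h1 : |(T e1) 0| ≤ ‖T e1‖ := coord_le_norm _ _
    rw [hc] at h1
    rw [abs_one] at h1
    have h2 : ‖T e1‖ ≤ ‖T‖ := by
      calc ‖T e1‖ ≤ ‖T‖ * ‖e1‖ := T.le_opNorm e1
        _ = ‖T‖ := by rw [norm_e1, mul_one]
    linarith
  have hTnorm : ‖T‖ = 1 := le_antisymm hTle hTge
  refine ⟨Amap, ?_, ?_⟩
  · intro lam
    rw [hTnorm]
    rcases le_or_gt 0 lam with hl | hl
    · have key : |((T + lam • Amap) e1) 0| ≤ ‖(T + lam • Amap) e1‖ := coord_le_norm _ _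
      have hval : ((T + lam • Amap) e1) 0 = 1 + lam := by
        simp [ContinuousLinearMap.add_apply, ContinuousLinearMap.smul_apply, hT,
          Amap_apply, e1_0, e1_1]
      rw [hval] at key
      have h2 : ‖(T + lam • Amap) e1‖ ≤ ‖T + lam • Amap‖ := by
        calc ‖(T + lam • Amap) e1‖ ≤ ‖T + lam • Amap‖ * ‖e1‖ :=
            (T + lam • Amap).le_opNorm e1
          _ = ‖T + lam • Amap‖ := by rw [norm_e1, mul_one]
      have : |1 + lam| = 1 + lam := abs_of_nonneg (by linarith)
      linarith
    · have key : |((T + lam • Amap) e2) 1| ≤ ‖(T + lam • Amap) e2‖ := coord_le_norm _ _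
      have hval : ((T + lam • Amap) e2) 1 = 1 - lam := by
        simp [ContinuousLinearMap.add_apply, ContinuousLinearMap.smul_apply, hT,
          Amap_apply, e2_0, e2_1]
        ring
      rw [hval] at key
      have h2 : ‖(T + lam • Amap) e2‖ ≤ ‖T + lam • Amap‖ := by
        calc ‖(T + lam • Amap) e2‖ ≤ ‖T + lam • Amap‖ * ‖e2‖ :=
            (T + lam • Amap).le_opNorm e2
          _ = ‖T + lam • Amap‖ := by rw [norm_e2, mul_one]
      have : |1 - lam| = 1 - lam := abs_of_nonneg (by linarith)
      linarith
  · rintro x ⟨hx1, hx2⟩ hBJ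
    rw [hTnorm] at hx2
    rw [norm_l1] at hx1
    -- ‖T x‖ ≤ max |x 0| |x 1|
    have hmax : (1 : ℝ) ≤ max |x 0| |x 1| := by
      have hle : ‖T x‖ ≤ max |x 0| |x 1| := by
        rw [hT]
        apply norm_linf_le _ _ (le_trans (abs_nonneg _) (le_max_left _ _))
        intro i
        have habs : |(x 0 + x 1) / 2| = |x 0 + x 1| / 2 := by rw [abs_div]; norm_num
        fin_cases i <;> simp
        rcases le_total |x 0| |x 1| with h | h
        · right; linarith [abs_add_le (x 0) (x 1)]
        · left; linarith [abs_add_le (x 0) (x 1)]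
      linarith [hx2 ▸ hle]
    have hcases : (x 0 = 0 ∧ |x 1| = 1) ∨ (x 1 = 0 ∧ |x 0| = 1) := by
      rcases le_total |x 0| |x 1| with h | h
      · left
        have h1 : |x 1| = 1 := by
          rw [max_eq_right h] at hmax
          linarith [abs_nonneg (x 0)]
        exact ⟨abs_eq_zero.1 (by linarith), h1⟩
      · right
        have h1 : |x 0| = 1 := by
          rw [max_eq_left h] at hmax
          linarith [abs_nonneg (x 1)]
        exact ⟨abs_eq_zero.1 (by linarith), h1⟩
    have hTx1 : ‖T x‖ = 1 := hx2
    rcases hcases with ⟨h0, h1⟩ | ⟨h0, h1⟩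
    · -- x = (0, ±1); take lam = 1/2
      have key := hBJ (1/2)
      rw [hTx1] at key
      have hbound : ‖T x + (1/2 : ℝ) • Amap x‖ ≤ 1/2 := by
        apply norm_linf_le _ _ (by norm_num)
        intro i
        rcases (abs_eq (by norm_num : (0:ℝ) ≤ 1)).1 h1 with hv | hv <;>
          fin_cases i <;>
          simp [hT, Amap_apply, h0, hv] <;> norm_num [abs_le]
      linarith
    · -- x = (±1, 0); take lam = -1/2
      have key := hBJ (-(1/2))
      rw [hTx1] at key
      have hbound : ‖T x + (-(1/2) : ℝ) • Amap x‖ ≤ 1/2 := by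
        apply norm_linf_le _ _ (by norm_num)
        intro i
        rcases (abs_eq (by norm_num : (0:ℝ) ≤ 1)).1 h1 with hv | hv <;>
          fin_cases i <;>
          simp [hT, Amap_apply, h0, hv] <;> norm_num [abs_le]
      linarith
end

section
/- Let T : ℓ_∞^3 → ℓ_2^3 be the bounded linear operator defined by Tx = x/√3, where ℓ_∞^3 is ℝ³ with the norm ‖(a,b,c)‖ = max{|a|,|b|,|c|} and ℓ_2^3 is ℝ³ with the Euclidean norm. Then T does not satisfy the Bhatia–Šemrl property; that is, there exists a bounded linear operator A : ℓ_∞^3 → ℓ_2^3 with T ⊥_B A such that Tx is not Birkhoff–James orthogonal to Ax for any x ∈ M_T. -/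
open RealInnerProductSpace

section InnerProductSpace

variable {E : Type*} [NormedAddCommGroup E] [InnerProductSpace ℝ E]

theorem norm_add_smul_sq (a b : E) (lam : ℝ) :
    ‖a + lam • b‖ ^ 2 = ‖a‖ ^ 2 + 2 * lam * ⟪a, b⟫ + lam ^ 2 * ‖b‖ ^ 2 := by
  rw [norm_add_sq_real, real_inner_smul_right, norm_smul, mul_pow, Real.norm_eq_abs, sq_abs]
  ring

theorem norm_le_norm_add_smul_of_inner_nonneg {a b : E} {lam : ℝ} (h : 0 ≤ lam * ⟪a, b⟫) :
    ‖a‖ ≤ ‖a + lam • b‖ := by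
  refine pow_le_pow_iff_left₀ (norm_nonneg _) (norm_nonneg _) two_ne_zero |>.1 ?_
  rw [norm_add_smul_sq]
  nlinarith [sq_nonneg (lam * ‖b‖)]

theorem bjOrth_iff_inner_eq_zero {a b : E} : BJOrth a b ↔ ⟪a, b⟫ = 0 := by
  refine ⟨fun h => ?_, fun h lam => norm_le_norm_add_smul_of_inner_nonneg (by simp [h])⟩
  by_contra hab
  have hb : b ≠ 0 := by rintro rfl; simp at hab
  -- the minimiser of `lam ↦ ‖a + lam • b‖`
  have key := h (-⟪a, b⟫ / ‖b‖ ^ 2)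
  have hb2 : 0 < ‖b‖ ^ 2 := by positivity
  rw [← pow_le_pow_iff_left₀ (norm_nonneg _) (norm_nonneg _) two_ne_zero, norm_add_smul_sq] at key
  have : 0 < ⟪a, b⟫ ^ 2 := by positivity
  field_simp at key
  nlinarith

end InnerProductSpace

theorem pi_norm_eq_one_of_abs_eq_one {ι : Type*} [Fintype ι] [Nonempty ι] {u : ι → ℝ}
    (hu : ∀ i, |u i| = 1) : ‖u‖ = 1 := by
  refine le_antisymm ((pi_norm_le_iff_of_nonneg zero_le_one).2 fun i => (hu i).le) ?_
  obtain ⟨i⟩ := ‹Nonempty ι›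
  exact (hu i).symm.le.trans (norm_le_pi_norm u i)

theorem opNorm_le_opNorm_add_smul_of_inner_nonneg
    {X Y : Type*} [NormedAddCommGroup X] [NormedSpace ℝ X]
    [NormedAddCommGroup Y] [InnerProductSpace ℝ Y] {T A : X →L[ℝ] Y} {x : X}
    (hx : x ∈ normAttainSet T) {lam : ℝ} (h : 0 ≤ lam * ⟪T x, A x⟫) :
    ‖T‖ ≤ ‖T + lam • A‖ :=
  calc ‖T‖ = ‖T x‖ := hx.2.symm
    _ ≤ ‖T x + lam • A x‖ := norm_le_norm_add_smul_of_inner_nonneg h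
    _ = ‖(T + lam • A) x‖ := rfl
    _ ≤ ‖T + lam • A‖ := by simpa [hx.1] using (T + lam • A).le_opNorm x

noncomputable def swapFirstTwoDropThird : (Fin 3 → ℝ) →L[ℝ] EuclideanSpace ℝ (Fin 3) :=
  (EuclideanSpace.equiv (Fin 3) ℝ).symm.toContinuousLinearMap ∘L
    ContinuousLinearMap.pi ![ContinuousLinearMap.proj 1, ContinuousLinearMap.proj 0, 0]

theorem swapFirstTwoDropThird_apply (x : Fin 3 → ℝ) (i : Fin 3) :
    swapFirstTwoDropThird x i = ![x 1, x 0, 0] i := by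
  fin_cases i <;> simp [swapFirstTwoDropThird]

section ScaledInclusion

variable {T : (Fin 3 → ℝ) →L[ℝ] EuclideanSpace ℝ (Fin 3)}
  (hT : ∀ (v : Fin 3 → ℝ) (i : Fin 3), T v i = v i / Real.sqrt 3)
include hT

theorem norm_sq_apply (v : Fin 3 → ℝ) : ‖T v‖ ^ 2 = (v 0 ^ 2 + v 1 ^ 2 + v 2 ^ 2) / 3 := by
  simp only [EuclideanSpace.norm_sq_eq, hT, norm_div, Real.norm_eq_abs, div_pow, sq_abs,
    Nat.ofNat_nonneg, Real.sq_sqrt, Fin.sum_univ_three]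
  ring

theorem inner_apply_swapFirstTwoDropThird (x : Fin 3 → ℝ) :
    ⟪T x, swapFirstTwoDropThird x⟫ = 2 * (x 0 * x 1) / Real.sqrt 3 := by
  simp only [PiLp.inner_apply, hT, swapFirstTwoDropThird_apply, RCLike.inner_apply, map_div₀,
    Real.ringHom_apply, Fin.sum_univ_three, Matrix.cons_val_zero, Matrix.cons_val_one,
    Matrix.cons_val, zero_mul, add_zero]
  ring

theorem norm_apply_of_abs_eq_one {u : Fin 3 → ℝ} (hu : ∀ i, |u i| = 1) : ‖T u‖ = 1 := by
  have hsq : ‖T u‖ ^ 2 = 1 ^ 2 := by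
    simp only [norm_sq_apply hT, ← sq_abs (u _), hu]
    norm_num
  exact (pow_left_inj₀ (norm_nonneg _) zero_le_one two_ne_zero).1 hsq

theorem opNorm_eq_one : ‖T‖ = 1 := by
  refine le_antisymm (T.opNorm_le_bound zero_le_one fun v => ?_) ?_
  · have hv : ∀ i, v i ^ 2 ≤ ‖v‖ ^ 2 := fun i => by
      simpa only [Real.norm_eq_abs, sq_abs] using
        pow_le_pow_left₀ (norm_nonneg _) (norm_le_pi_norm v i) 2
    rw [one_mul, ← pow_le_pow_iff_left₀ (norm_nonneg _) (norm_nonneg _) two_ne_zero,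
      norm_sq_apply hT]
    linarith [hv 0, hv 1, hv 2]
  · have hu : ∀ i, |(1 : Fin 3 → ℝ) i| = 1 := by simp
    simpa [norm_apply_of_abs_eq_one hT hu, pi_norm_eq_one_of_abs_eq_one hu] using T.le_opNorm 1

theorem mem_normAttainSet_of_abs_eq_one {u : Fin 3 → ℝ} (hu : ∀ i, |u i| = 1) :
    u ∈ normAttainSet T :=
  ⟨pi_norm_eq_one_of_abs_eq_one hu, by rw [norm_apply_of_abs_eq_one hT hu, opNorm_eq_one hT]⟩

theorem sq_eq_one_of_mem_normAttainSet {x : Fin 3 → ℝ} (hx : x ∈ normAttainSet T) (i : Fin 3) :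
    x i ^ 2 = 1 := by
  have hle : ∀ j, x j ^ 2 ≤ 1 := fun j => by
    simpa only [Real.norm_eq_abs, sq_abs, hx.1, one_pow] using
      pow_le_pow_left₀ (norm_nonneg _) (norm_le_pi_norm x j) 2
  have hsum : (x 0 ^ 2 + x 1 ^ 2 + x 2 ^ 2) / 3 = 1 := by
    rw [← norm_sq_apply hT, hx.2, opNorm_eq_one hT, one_pow]
  fin_cases i <;> simp only [Fin.zero_eta, Fin.mk_one, Fin.reduceFinMk] <;>
    linarith [hle 0, hle 1, hle 2]

end ScaledInclusion

/-- The operator `T : ℓ_∞^3 → ℓ_2^3`, `T x = x / √3`, does not satisfy the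
Bhatia–Šemrl property.  Here `ℓ_∞^3` is `Fin 3 → ℝ` with the sup norm and `ℓ_2^3` is
`EuclideanSpace ℝ (Fin 3)`. -/
theorem stmt19 (T : (Fin 3 → ℝ) →L[ℝ] EuclideanSpace ℝ (Fin 3))
    (hT : ∀ (v : Fin 3 → ℝ) (i : Fin 3), T v i = v i / Real.sqrt 3) :
    ∃ A : (Fin 3 → ℝ) →L[ℝ] EuclideanSpace ℝ (Fin 3),
      (∀ lam : ℝ, ‖T‖ ≤ ‖T + lam • A‖) ∧
      ∀ x ∈ normAttainSet T, ¬ BJOrth (T x) (A x) := by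
  refine ⟨swapFirstTwoDropThird, fun lam => ?_, fun x hx hBJ => ?_⟩
  · rcases le_total 0 lam with hlam | hlam
    · refine opNorm_le_opNorm_add_smul_of_inner_nonneg
        (mem_normAttainSet_of_abs_eq_one hT (u := ![1, 1, 1]) ?_) ?_
      · intro i; fin_cases i <;> simp
      · rw [inner_apply_swapFirstTwoDropThird hT]
        exact mul_nonneg hlam (by norm_num; positivity)
    · refine opNorm_le_opNorm_add_smul_of_inner_nonneg
        (mem_normAttainSet_of_abs_eq_one hT (u := ![1, -1, 1]) ?_) ?_
      · intro i; fin_cases i <;> simp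
      · rw [inner_apply_swapFirstTwoDropThird hT]
        exact mul_nonneg_of_nonpos_of_nonpos hlam (by norm_num [neg_div]; positivity)
  · have h0 := sq_eq_one_of_mem_normAttainSet hT hx 0
    have h1 := sq_eq_one_of_mem_normAttainSet hT hx 1
    have hprod : (x 0 * x 1) ^ 2 = 1 := by rw [mul_pow, h0, h1, one_mul]
    have hinner := bjOrth_iff_inner_eq_zero.1 hBJ
    rw [inner_apply_swapFirstTwoDropThird hT] at hinner
    have hzero : x 0 * x 1 = 0 := by simpa using hinner
    simp [hzero] at hprod
end
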